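/- arXiv:1807.11438 — 2 statements merged into one kernel-verified Lean document; each statement's English description precedes it below -/
import Mathlib

section
/- The subgroup G of GL(4,ℂ) generated by the two matrices g₁ = diag(i, -i, i, -i) and g₂ = -(1/2)·blockdiag(((1+i)ε, (-1+i)ε; (1+i)ε, (1-i)ε), ((1+i)ε², (-1+i)ε²; (1+i)ε², (1-i)ε²)), where ε = e^{2πi/3}, is a finite group of order 24 isomorphic to SL(2, 𝔽₃) (the binary tetrahedral group). -/
open Matrix Complex

noncomputable section

/-- ε = e^{2πi/3}, a primitive third root of unity. -/
def ε : ℂ := Complex.exp (2 * Real.pi * Complex.I / 3)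

/-- g₁ = diag(i, -i, i, -i). -/
def g₁ : Matrix (Fin 4) (Fin 4) ℂ :=
  !![I, 0, 0, 0; 0, -I, 0, 0; 0, 0, I, 0; 0, 0, 0, -I]

/-- g₂ = -(1/2)·blockdiag(((1+i)ε, (-1+i)ε; (1+i)ε, (1-i)ε),
    ((1+i)ε², (-1+i)ε²; (1+i)ε², (1-i)ε²)). -/
def g₂ : Matrix (Fin 4) (Fin 4) ℂ :=
  (-(1/2 : ℂ)) • !![(1+I)*ε, (-1+I)*ε, 0, 0;
                    (1+I)*ε, (1-I)*ε, 0, 0;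
                    0, 0, (1+I)*ε^2, (-1+I)*ε^2;
                    0, 0, (1+I)*ε^2, (1-I)*ε^2]

/-- G is the subgroup of GL(4,ℂ) (the group of units of the matrix ring)
    generated by g₁ and g₂. -/
def G : Subgroup (Matrix (Fin 4) (Fin 4) ℂ)ˣ :=
  Subgroup.closure {u : (Matrix (Fin 4) (Fin 4) ℂ)ˣ |
    (u : Matrix (Fin 4) (Fin 4) ℂ) = g₁ ∨ (u : Matrix (Fin 4) (Fin 4) ℂ) = g₂}

/-!
Both generators are block diagonal: `g₁ = diag(A, A)` and `g₂ = diag(ε • B, ε² • B)`, where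
`A = diag(i, -i)` and `B = -(1/2)·((1+i, -1+i), (1+i, 1-i))` lie in `SL(2, ℚ(i))`. So `G` is the
image of the subgroup of `SL(2, ℚ(i)) × ℤ/3` generated by `(A, 0)` and `(B, 1)` under the injective
homomorphism `(x, k) ↦ diag(εᵏ • x, ε²ᵏ • x)`, and only arithmetic in `ℚ(i)` is left to do.

Pairing `A` with `s = ((1, 1), (1, 2))` and `B` with `t = ((0, 1), (2, 2))` in `SL(2, 𝔽₃)`, the
subgroup generated by the two pairs is the graph of an isomorphism: a direct computation shows that
the products of at most five generators already form a set closed under multiplication by the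
generators, and that both projections are injective on it, the second one onto `SL(2, 𝔽₃)`.
-/

open QuadraticAlgebra Pointwise
open scoped MatrixGroups

section SubgroupClosure

variable {H K : Type*} [Group H] [Group K]

theorem Subgroup.closure_subset_of_mul_subset {S T : Set H} (hT : T.Finite) (h1 : 1 ∈ T)
    (hTS : T * S ⊆ T) : (closure S : Set H) ⊆ T := by
  have hmon : (Submonoid.closure S : Set H) ⊆ T := fun x hx => by
    induction hx using Submonoid.closure_induction_right with
    | one => exact h1
    | mul_right x _ s hs hx => exact hTS (Set.mul_mem_mul hx hs)
  -- the powers of each generator stay in the finite set `T`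
  have hS : ∀ s ∈ S, IsOfFinOrder s := fun s hs =>
    finite_powers.mp <| hT.subset <|
      (SetLike.coe_subset_coe.mpr (Submonoid.powers_le.mpr (Submonoid.subset_closure hs))).trans
        hmon
  rw [← Subgroup.coe_toSubmonoid, Subgroup.closure_toSubmonoid_of_isOfFinOrder hS]
  exact hmon

theorem Subgroup.coe_closure_eq_pow [DecidableEq H] {S : Finset H} {n : ℕ}
    (h : insert 1 S ^ n * S ⊆ insert 1 S ^ n) :
    (closure (S : Set H) : Set H) = ↑(insert 1 S ^ n) := by
  refine subset_antisymm (closure_subset_of_mul_subset (Finset.finite_toSet _) ?_ ?_) ?_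
  · exact Finset.mem_coe.mpr (Finset.one_mem_pow (Finset.mem_insert_self 1 S))
  · rw [← Finset.coe_mul]
    exact Finset.coe_subset.mpr h
  · rw [Finset.coe_pow]
    refine Submonoid.pow_subset (S := (closure (S : Set H)).toSubmonoid) ?_
    rw [Finset.coe_insert, Set.insert_subset_iff]
    exact ⟨one_mem _, subset_closure⟩

def Subgroup.equivMapOfInjOn (L : Subgroup H) (f : H →* K) (hf : Set.InjOn f L) :
    L ≃* L.map f :=
  (MonoidHom.ofInjective (f := f.domRestrict L) fun x y hxy =>
    Subtype.ext (hf x.2 y.2 hxy)).trans (MulEquiv.subgroupCongr (f.domRestrict_range L))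

end SubgroupClosure

section BlockDiagonal

variable {R : Type*} [CommRing R] {M : Type*} [Monoid M]

def blockDiag₂ : (Fin 2 → Matrix (Fin 2) (Fin 2) R) →+* Matrix (Fin 4) (Fin 4) R :=
  (reindexAlgEquiv R R ((Equiv.prodComm _ _).trans finProdFinEquiv)).toRingHom.comp
    (blockDiagonalRingHom (Fin 2) (Fin 2) R)

lemma blockDiag₂_injective : Function.Injective (blockDiag₂ (R := R)) :=
  (reindexAlgEquiv R R _).injective.comp blockDiagonal_injective

lemma blockDiag₂_cons (x y : Matrix (Fin 2) (Fin 2) R) :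
    blockDiag₂ ![x, y] = !![x 0 0, x 0 1, 0, 0; x 1 0, x 1 1, 0, 0;
      0, 0, y 0 0, y 0 1; 0, 0, y 1 0, y 1 1] := by
  ext i j; fin_cases i <;> fin_cases j <;> rfl

def blockTwist (χ : M →* R) : Matrix (Fin 2) (Fin 2) R × M →* Matrix (Fin 4) (Fin 4) R where
  toFun p := blockDiag₂ ![χ p.2 • p.1, χ p.2 ^ 2 • p.1]
  map_one' := by
    rw [← map_one blockDiag₂]
    congr 1; ext k : 1; fin_cases k <;> simp
  map_mul' p q := by
    rw [← map_mul]
    congr 1; ext k : 1; fin_cases k <;> simp [mul_pow, smul_smul, mul_comm]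

lemma blockTwist_eq_one {χ : M →* R} (hχ : ∀ k, χ k = 1 → k = 1)
    {p : Matrix (Fin 2) (Fin 2) R × M} (hp : blockTwist χ p = 1) : p = 1 := by
  obtain ⟨x, k⟩ := p
  have h : ![χ k • x, χ k ^ 2 • x] = 1 := blockDiag₂_injective (hp.trans (map_one _).symm)
  have hx : χ k • x = 1 := congrFun h 0
  have hχk : χ k = 1 := by
    have : χ k • (1 : Matrix (Fin 2) (Fin 2) R) = 1 :=
      calc χ k • (1 : Matrix (Fin 2) (Fin 2) R) = χ k • χ k • x := by rw [hx]
        _ = χ k ^ 2 • x := by rw [smul_smul, sq]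
        _ = 1 := congrFun h 1
    simpa using congrFun (congrFun this 0) 0
  rw [hχk, one_smul] at hx
  exact Prod.ext hx (hχ k hχk)

end BlockDiagonal

section Blocks

def g₁Block {R : Type*} [Ring R] (i : R) : Matrix (Fin 2) (Fin 2) R := !![i, 0; 0, -i]

lemma g₁Block_map {R S : Type*} [Ring R] [Ring S] (f : R →+* S) (i : R) :
    (g₁Block i).map f = g₁Block (f i) := by
  ext a b; fin_cases a <;> fin_cases b <;> simp [g₁Block]

variable {R S : Type*} [DivisionRing R] [DivisionRing S]

def g₂Block (i : R) : Matrix (Fin 2) (Fin 2) R := (-(1 / 2 : R)) • !![1 + i, -1 + i; 1 + i, 1 - i]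

lemma g₂Block_map (f : R →+* S) (i : R) : (g₂Block i).map f = g₂Block (f i) := by
  ext a b; fin_cases a <;> fin_cases b <;> simp [g₂Block, map_ofNat]

end Blocks

abbrev GaussianRat := QuadraticAlgebra ℚ (-1) 0

-- makes `GaussianRat` a field
instance : Fact (∀ r : ℚ, r ^ 2 ≠ -1 + 0 * r) := ⟨fun r h => by nlinarith [sq_nonneg r]⟩

def GaussianRat.toComplex : GaussianRat →+* ℂ :=
  (QuadraticAlgebra.lift ⟨I, by simp⟩ : GaussianRat →ₐ[ℚ] ℂ).toRingHom

@[simp] lemma GaussianRat.toComplex_omega : GaussianRat.toComplex ω = I := by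
  simp [GaussianRat.toComplex]

lemma isPrimitiveRoot_ε : IsPrimitiveRoot ε 3 := by
  simpa [ε] using Complex.isPrimitiveRoot_exp 3 (by norm_num)

def cubeRootChar : Multiplicative (ZMod 3) →* ℂ :=
  (AddChar.zmodChar 3 isPrimitiveRoot_ε.pow_eq_one).toMonoidHom

lemma cubeRootChar_eq_one {k : Multiplicative (ZMod 3)} (hk : cubeRootChar k = 1) : k = 1 :=
  (AddChar.IsPrimitive.zmod_char_eq_one_iff 3
    (AddChar.zmodChar_primitive_of_primitive_root 3 isPrimitiveRoot_ε) k.toAdd).mp hk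

lemma cubeRootChar_ofAdd_one : cubeRootChar (.ofAdd 1) = ε := by
  simp [cubeRootChar, AddChar.zmodChar_apply, ZMod.val_one]

abbrev BlockModel := SL(2, GaussianRat) × Multiplicative (ZMod 3)

def blockEmbedding : BlockModel →* (Matrix (Fin 4) (Fin 4) ℂ)ˣ :=
  ((blockTwist cubeRootChar).comp
    ((GaussianRat.toComplex.mapMatrix.toMonoidHom.comp SpecialLinearGroup.coeMonoidHom).prodMap
      (MonoidHom.id _))).toHomUnits

lemma blockEmbedding_injective : Function.Injective blockEmbedding := by
  rw [injective_iff_map_eq_one]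
  rintro ⟨x, k⟩ h
  obtain ⟨hx, hk⟩ :=
    Prod.ext_iff.mp (blockTwist_eq_one (fun _ => cubeRootChar_eq_one) (congrArg Units.val h))
  refine Prod.ext (Subtype.ext (Matrix.map_injective GaussianRat.toComplex.injective ?_)) hk
  simpa using hx

-- `+kernel`: arithmetic in `ℚ` does not reduce at the transparency `decide` uses by default
def gaussianGen₁ : SL(2, GaussianRat) := ⟨g₁Block ω, by decide +kernel⟩

def gaussianGen₂ : SL(2, GaussianRat) := ⟨g₂Block ω, by decide +kernel⟩

lemma val_blockEmbedding_gaussianGen₁ :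
    (blockEmbedding (gaussianGen₁, 1) : Matrix (Fin 4) (Fin 4) ℂ) = g₁ := by
  change blockTwist cubeRootChar ((g₁Block ω).map GaussianRat.toComplex, 1) = g₁
  rw [g₁Block_map, GaussianRat.toComplex_omega]
  ext i j; fin_cases i <;> fin_cases j <;> simp [blockTwist, blockDiag₂_cons, g₁Block, g₁]

lemma val_blockEmbedding_gaussianGen₂ :
    (blockEmbedding (gaussianGen₂, .ofAdd 1) : Matrix (Fin 4) (Fin 4) ℂ) = g₂ := by
  change blockTwist cubeRootChar ((g₂Block ω).map GaussianRat.toComplex, .ofAdd 1) = g₂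
  rw [g₂Block_map, GaussianRat.toComplex_omega]
  ext i j; fin_cases i <;> fin_cases j <;>
    simp [blockTwist, blockDiag₂_cons, g₂Block, g₂, cubeRootChar_ofAdd_one] <;> ring

def zmodGen₁ : SL(2, ZMod 3) := ⟨!![1, 1; 1, 2], by decide⟩

def zmodGen₂ : SL(2, ZMod 3) := ⟨!![0, 1; 2, 2], by decide⟩

def isoGraphGens : Finset (BlockModel × SL(2, ZMod 3)) :=
  {((gaussianGen₁, 1), zmodGen₁), ((gaussianGen₂, .ofAdd 1), zmodGen₂)}

def isoGraphSet : Finset (BlockModel × SL(2, ZMod 3)) := insert 1 isoGraphGens ^ 5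

lemma isoGraphSet_mul_isoGraphGens_subset : isoGraphSet * isoGraphGens ⊆ isoGraphSet := by
  decide +kernel

lemma injOn_fst_isoGraphSet :
    Set.InjOn Prod.fst (isoGraphSet : Set (BlockModel × SL(2, ZMod 3))) := by
  intro x hx y hy
  revert x y
  decide +kernel

lemma injOn_snd_isoGraphSet :
    Set.InjOn Prod.snd (isoGraphSet : Set (BlockModel × SL(2, ZMod 3))) := by
  intro x hx y hy
  revert x y
  decide +kernel

lemma image_snd_isoGraphSet : isoGraphSet.image Prod.snd = Finset.univ := by
  decide +kernel

def isoGraph : Subgroup (BlockModel × SL(2, ZMod 3)) := Subgroup.closure isoGraphGens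

lemma coe_isoGraph : (isoGraph : Set (BlockModel × SL(2, ZMod 3))) = isoGraphSet :=
  Subgroup.coe_closure_eq_pow isoGraphSet_mul_isoGraphGens_subset

lemma isoGraph_map_blockEmbedding_fst :
    isoGraph.map (blockEmbedding.comp (MonoidHom.fst _ _)) = G := by
  rw [isoGraph, MonoidHom.map_closure, G, isoGraphGens, Finset.coe_pair, Set.image_pair]
  congr 1
  ext u
  simp only [MonoidHom.coe_comp, Function.comp_apply, MonoidHom.coe_fst, Set.mem_insert_iff,
    Set.mem_singleton_iff, Set.mem_ofPred_eq, Units.ext_iff, val_blockEmbedding_gaussianGen₁,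
    val_blockEmbedding_gaussianGen₂]

lemma isoGraph_map_snd : isoGraph.map (MonoidHom.snd _ _) = ⊤ := by
  rw [eq_top_iff]
  intro g _
  obtain ⟨p, hp, rfl⟩ := Finset.mem_image.mp (image_snd_isoGraphSet ▸ Finset.mem_univ g)
  exact ⟨p, coe_isoGraph ▸ hp, rfl⟩

def isoGraphEquivG : isoGraph ≃* G :=
  (isoGraph.equivMapOfInjOn _ (blockEmbedding_injective.comp_injOn
    (coe_isoGraph ▸ injOn_fst_isoGraphSet))).trans
    (MulEquiv.subgroupCongr isoGraph_map_blockEmbedding_fst)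

def isoGraphEquivSL : isoGraph ≃* SL(2, ZMod 3) :=
  (isoGraph.equivMapOfInjOn _ (coe_isoGraph ▸ injOn_snd_isoGraphSet)).trans
    ((MulEquiv.subgroupCongr isoGraph_map_snd).trans Subgroup.topEquiv)

theorem binary_tetrahedral_group_order_and_iso :
    Finite G ∧ Nat.card G = 24 ∧
    Nonempty (G ≃* Matrix.SpecialLinearGroup (Fin 2) (ZMod 3)) := by
  let e : G ≃* SL(2, ZMod 3) := isoGraphEquivG.symm.trans isoGraphEquivSL
  refine ⟨Finite.of_equiv _ e.symm.toEquiv, ?_, ⟨e⟩⟩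
  rw [Nat.card_congr e.toEquiv, Nat.card_eq_fintype_card]
  decide
end
end

section
/- The natural 4-dimensional representation of G on ℂ⁴ decomposes as a direct sum V₁ ⊕ V₂ of two 2-dimensional irreducible subrepresentations, where V₁ = span(e₁,e₂) and V₂ = span(e₃,e₄); in particular neither V₁ nor V₂ contains a nonzero G-invariant vector subspace of dimension 1. -/
open Matrix Complex

noncomputable section

/-- V₁ = span(e₁, e₂). -/
def V₁ : Submodule ℂ (Fin 4 → ℂ) := Submodule.span ℂ {Pi.single 0 1, Pi.single 1 1}
/-- V₂ = span(e₃, e₄). -/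
def V₂ : Submodule ℂ (Fin 4 → ℂ) := Submodule.span ℂ {Pi.single 2 1, Pi.single 3 1}

/-- W is invariant under the linear action of the matrix g. -/
def InvariantUnder (g : Matrix (Fin 4) (Fin 4) ℂ) (W : Submodule ℂ (Fin 4 → ℂ)) : Prop :=
  ∀ v ∈ W, g.mulVec v ∈ W

lemma g1mul (v : Fin 4 → ℂ) : g₁.mulVec v = ![I * v 0, -I * v 1, I * v 2, -I * v 3] := by
  funext i
  fin_cases i <;>
    simp [g₁, Matrix.mulVec, dotProduct, Fin.sum_univ_four]

lemma g2mul (v : Fin 4 → ℂ) : g₂.mulVec v =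
    ![(-(1/2:ℂ)) * ((1+I)*ε * v 0 + (-1+I)*ε * v 1),
      (-(1/2:ℂ)) * ((1+I)*ε * v 0 + (1-I)*ε * v 1),
      (-(1/2:ℂ)) * ((1+I)*ε^2 * v 2 + (-1+I)*ε^2 * v 3),
      (-(1/2:ℂ)) * ((1+I)*ε^2 * v 2 + (1-I)*ε^2 * v 3)] := by
  funext i
  fin_cases i <;>
    simp [g₂, Matrix.mulVec, dotProduct, Fin.sum_univ_four] <;> ring

lemma memV₁ (v : Fin 4 → ℂ) (h2 : v 2 = 0) (h3 : v 3 = 0) : v ∈ V₁ := by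
  have : v = v 0 • (Pi.single 0 1 : Fin 4 → ℂ) + v 1 • (Pi.single 1 1 : Fin 4 → ℂ) := by
    funext i; fin_cases i <;> simp [Pi.single_apply, h2, h3]
  rw [this]
  exact Submodule.add_mem _
    (Submodule.smul_mem _ _ (Submodule.subset_span (Set.mem_insert _ _)))
    (Submodule.smul_mem _ _ (Submodule.subset_span (Set.mem_insert_of_mem _ rfl)))

lemma memV₂ (v : Fin 4 → ℂ) (h0 : v 0 = 0) (h1 : v 1 = 0) : v ∈ V₂ := by
  have : v = v 2 • (Pi.single 2 1 : Fin 4 → ℂ) + v 3 • (Pi.single 3 1 : Fin 4 → ℂ) := by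
    funext i; fin_cases i <;> simp [Pi.single_apply, h0, h1]
  rw [this]
  exact Submodule.add_mem _
    (Submodule.smul_mem _ _ (Submodule.subset_span (Set.mem_insert _ _)))
    (Submodule.smul_mem _ _ (Submodule.subset_span (Set.mem_insert_of_mem _ rfl)))

lemma V₁mem (v : Fin 4 → ℂ) (h : v ∈ V₁) : v 2 = 0 ∧ v 3 = 0 := by
  induction h using Submodule.span_induction with
  | mem x hx =>
    rcases hx with h | h <;> subst h <;> constructor <;> simp [Pi.single_apply]
  | zero => simp
  | add x y _ _ hx hy => exact ⟨by simp [hx.1, hy.1], by simp [hx.2, hy.2]⟩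
  | smul c x _ hx => exact ⟨by simp [hx.1], by simp [hx.2]⟩

lemma V₂mem (v : Fin 4 → ℂ) (h : v ∈ V₂) : v 0 = 0 ∧ v 1 = 0 := by
  induction h using Submodule.span_induction with
  | mem x hx =>
    rcases hx with h | h <;> subst h <;> constructor <;> simp [Pi.single_apply]
  | zero => simp
  | add x y _ _ hx hy => exact ⟨by simp [hx.1, hy.1], by simp [hx.2, hy.2]⟩
  | smul c x _ hx => exact ⟨by simp [hx.1], by simp [hx.2]⟩

lemma li2 : LinearIndependent ℂ ![(Pi.single 0 1 : Fin 4 → ℂ), Pi.single 1 1] := by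
  have := (Pi.basisFun ℂ (Fin 4)).linearIndependent
  have h := this.comp ![0, 1] (by decide)
  convert h using 1
  funext i; fin_cases i <;> simp [Pi.basisFun_apply]

lemma frV₁ : Module.finrank ℂ V₁ = 2 := by
  have : V₁ = Submodule.span ℂ (Set.range ![(Pi.single 0 1 : Fin 4 → ℂ), Pi.single 1 1]) := by
    rw [V₁]; congr 1
    simp [Matrix.range_cons, Matrix.range_empty, Set.pair_comm]
  rw [this, finrank_span_eq_card li2]
  simp

lemma li2' : LinearIndependent ℂ ![(Pi.single 2 1 : Fin 4 → ℂ), Pi.single 3 1] := by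
  have := (Pi.basisFun ℂ (Fin 4)).linearIndependent
  have h := this.comp ![2, 3] (by decide)
  convert h using 1
  funext i; fin_cases i <;> simp [Pi.basisFun_apply]

lemma frV₂ : Module.finrank ℂ V₂ = 2 := by
  have : V₂ = Submodule.span ℂ (Set.range ![(Pi.single 2 1 : Fin 4 → ℂ), Pi.single 3 1]) := by
    rw [V₂]; congr 1
    simp [Matrix.range_cons, Matrix.range_empty, Set.pair_comm]
  rw [this, finrank_span_eq_card li2']
  simp

lemma compl : IsCompl V₁ V₂ := by
  constructor
  · rw [Submodule.disjoint_def]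
    intro x h1 h2
    obtain ⟨a2, a3⟩ := V₁mem x h1
    obtain ⟨a0, a1⟩ := V₂mem x h2
    funext i; fin_cases i <;> assumption
  · rw [codisjoint_iff, Submodule.eq_top_iff']
    intro v
    refine Submodule.mem_sup.mpr ⟨![v 0, v 1, 0, 0], memV₁ _ (by simp) (by simp),
      ![0, 0, v 2, v 3], memV₂ _ (by simp) (by simp), ?_⟩
    funext i; fin_cases i <;> simp

lemma inv11 : InvariantUnder g₁ V₁ := by
  intro v hv
  obtain ⟨a2, a3⟩ := V₁mem v hv
  exact memV₁ _ (by simp [g1mul, a2]) (by simp [g1mul, a3])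

lemma inv21 : InvariantUnder g₂ V₁ := by
  intro v hv
  obtain ⟨a2, a3⟩ := V₁mem v hv
  exact memV₁ _ (by simp [g2mul, a2, a3]) (by simp [g2mul, a2, a3])

lemma inv12 : InvariantUnder g₁ V₂ := by
  intro v hv
  obtain ⟨a0, a1⟩ := V₂mem v hv
  exact memV₂ _ (by simp [g1mul, a0]) (by simp [g1mul, a1])

lemma inv22 : InvariantUnder g₂ V₂ := by
  intro v hv
  obtain ⟨a0, a1⟩ := V₂mem v hv
  exact memV₂ _ (by simp [g2mul, a0, a1]) (by simp [g2mul, a0, a1])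

lemma εne : ε ≠ 0 := Complex.exp_ne_zero _

lemma irr1 : ∀ W : Submodule ℂ (Fin 4 → ℂ), W ≤ V₁ →
    InvariantUnder g₁ W → InvariantUnder g₂ W → Module.finrank ℂ W ≠ 1 := by
  intro W hle h1 h2 hr
  obtain ⟨v₀, hv₀, hspan⟩ := finrank_eq_one_iff'.mp hr
  set v : Fin 4 → ℂ := (v₀ : Fin 4 → ℂ) with hv
  have hvne : v ≠ 0 := fun h => hv₀ (Subtype.ext h)
  obtain ⟨a2, a3⟩ := V₁mem v (hle v₀.2)
  obtain ⟨c, hc⟩ := hspan ⟨g₁.mulVec v, h1 v v₀.2⟩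
  obtain ⟨d, hd⟩ := hspan ⟨g₂.mulVec v, h2 v v₀.2⟩
  have hc' : c • v = g₁.mulVec v := congrArg Subtype.val hc
  have hd' : d • v = g₂.mulVec v := congrArg Subtype.val hd
  have e0 : c * v 0 = I * v 0 := by simpa [g1mul] using congrFun hc' 0
  have e1 : c * v 1 = -I * v 1 := by simpa [g1mul] using congrFun hc' 1
  have f0 : d * v 0 = -(1/2) * ((1+I)*ε * v 0 + (-1+I)*ε * v 1) := by
    simpa [g2mul] using congrFun hd' 0
  have f1 : d * v 1 = -(1/2) * ((1+I)*ε * v 0 + (1-I)*ε * v 1) := by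
    simpa [g2mul] using congrFun hd' 1
  have hne1 : (-1 + I : ℂ) ≠ 0 := by simp [Complex.ext_iff]
  have hne2 : (1 + I : ℂ) ≠ 0 := by simp [Complex.ext_iff]
  by_cases h0 : v 0 = 0
  · -- then v 1 = 0 from f0, contradiction with v ≠ 0
    rw [h0] at f0
    have hz : (-1 + I) * ε * v 1 = 0 := by linear_combination (2 : ℂ) * f0
    have hv1 : v 1 = 0 :=
      (mul_eq_zero.mp hz).resolve_left (mul_ne_zero hne1 εne)
    exact hvne (funext fun i => by fin_cases i <;> assumption)
  · have hcI : c = I := mul_right_cancel₀ h0 (by linear_combination e0)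
    have hv1 : v 1 = 0 := by
      rw [hcI] at e1
      have : (2 * I) * v 1 = 0 := by linear_combination e1
      exact (mul_eq_zero.mp this).resolve_left (by simp [Complex.ext_iff])
    rw [hv1] at f1
    have hz : (1 + I) * ε * v 0 = 0 := by linear_combination (2 : ℂ) * f1
    exact h0 ((mul_eq_zero.mp hz).resolve_left (mul_ne_zero hne2 εne))

lemma irr2 : ∀ W : Submodule ℂ (Fin 4 → ℂ), W ≤ V₂ →
    InvariantUnder g₁ W → InvariantUnder g₂ W → Module.finrank ℂ W ≠ 1 := by
  intro W hle h1 h2 hr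
  obtain ⟨v₀, hv₀, hspan⟩ := finrank_eq_one_iff'.mp hr
  set v : Fin 4 → ℂ := (v₀ : Fin 4 → ℂ) with hv
  have hvne : v ≠ 0 := fun h => hv₀ (Subtype.ext h)
  obtain ⟨a0, a1⟩ := V₂mem v (hle v₀.2)
  obtain ⟨c, hc⟩ := hspan ⟨g₁.mulVec v, h1 v v₀.2⟩
  obtain ⟨d, hd⟩ := hspan ⟨g₂.mulVec v, h2 v v₀.2⟩
  have hc' : c • v = g₁.mulVec v := congrArg Subtype.val hc
  have hd' : d • v = g₂.mulVec v := congrArg Subtype.val hd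
  have e0 : c * v 2 = I * v 2 := by simpa [g1mul] using congrFun hc' 2
  have e1 : c * v 3 = -I * v 3 := by simpa [g1mul] using congrFun hc' 3
  have f0 : d * v 2 = -(1/2) * ((1+I)*ε^2 * v 2 + (-1+I)*ε^2 * v 3) := by
    simpa [g2mul] using congrFun hd' 2
  have f1 : d * v 3 = -(1/2) * ((1+I)*ε^2 * v 2 + (1-I)*ε^2 * v 3) := by
    simpa [g2mul] using congrFun hd' 3
  have hne1 : (-1 + I : ℂ) ≠ 0 := by simp [Complex.ext_iff]
  have hne2 : (1 + I : ℂ) ≠ 0 := by simp [Complex.ext_iff]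
  have hε2 : (ε^2 : ℂ) ≠ 0 := pow_ne_zero _ εne
  by_cases h0 : v 2 = 0
  · rw [h0] at f0
    have hz : (-1 + I) * ε^2 * v 3 = 0 := by linear_combination (2 : ℂ) * f0
    have hv1 : v 3 = 0 :=
      (mul_eq_zero.mp hz).resolve_left (mul_ne_zero hne1 hε2)
    exact hvne (funext fun i => by fin_cases i <;> assumption)
  · have hcI : c = I := mul_right_cancel₀ h0 (by linear_combination e0)
    have hv1 : v 3 = 0 := by
      rw [hcI] at e1
      have : (2 * I) * v 3 = 0 := by linear_combination e1
      exact (mul_eq_zero.mp this).resolve_left (by simp [Complex.ext_iff])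
    rw [hv1] at f1
    have hz : (1 + I) * ε^2 * v 2 = 0 := by linear_combination (2 : ℂ) * f1
    exact h0 ((mul_eq_zero.mp hz).resolve_left (mul_ne_zero hne2 hε2))

theorem representation_decomposes_into_two_irreducibles :
    IsCompl V₁ V₂ ∧
    Module.finrank ℂ V₁ = 2 ∧ Module.finrank ℂ V₂ = 2 ∧
    InvariantUnder g₁ V₁ ∧ InvariantUnder g₂ V₁ ∧
    InvariantUnder g₁ V₂ ∧ InvariantUnder g₂ V₂ ∧
    (∀ W : Submodule ℂ (Fin 4 → ℂ), W ≤ V₁ →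
      InvariantUnder g₁ W → InvariantUnder g₂ W → Module.finrank ℂ W ≠ 1) ∧
    (∀ W : Submodule ℂ (Fin 4 → ℂ), W ≤ V₂ →
      InvariantUnder g₁ W → InvariantUnder g₂ W → Module.finrank ℂ W ≠ 1) :=
  ⟨compl, frV₁, frV₂, inv11, inv21, inv12, inv22, irr1, irr2⟩
end
end
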